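/- arXiv:math/0607301 — 2 statements merged into one kernel-verified Lean document; each statement's English description precedes it below -/
import Mathlib

section
/- Let (W,S) be a Coxeter system with exactly one bad 5-edge. Let D be a gross separator of S with head A, let F be the set of all good foci of D, let B₁,…,B_k be the bad separators of S with head A, and let F_i be the set of good foci of B_i. Then F = F₁ ∪ ⋯ ∪ F_k, the sets F₁,…,F_k are pairwise disjoint, and for i ≠ j no element of F_i is adjacent in Γ(W,S) to an element of F_j. -/
/-- A simple graph is *chordal* if every cycle of length at least four has a chord,
that is, an edge of the graph joining two vertices of the cycle that is not an
edge of the cycle. -/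
def SimpleGraph.IsChordal {V : Type*} (G : SimpleGraph V) : Prop :=
  ∀ ⦃v : V⦄ (w : G.Walk v v), w.IsCycle → 4 ≤ w.length →
    ∃ a b, a ∈ w.support ∧ b ∈ w.support ∧ G.Adj a b ∧ s(a, b) ∉ w.edges

/-- `B` is a `(c,f)`-separator of `G`: `c, f ∉ B` and `c` and `f` lie in different
connected components of the induced subgraph `G − B`. -/
def SimpleGraph.IsSeparator {V : Type*} (G : SimpleGraph V) (c f : V) (Bs : Set V) : Prop :=
  ∃ (hc : c ∈ Bsᶜ) (hf : f ∈ Bsᶜ), ¬ (G.induce Bsᶜ).Reachable ⟨c, hc⟩ ⟨f, hf⟩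

/-- `B` is a minimal `(c,f)`-separator: no proper subset of `B` is a `(c,f)`-separator. -/
def SimpleGraph.IsMinSeparator {V : Type*} (G : SimpleGraph V) (c f : V) (Bs : Set V) : Prop :=
  G.IsSeparator c f Bs ∧ ∀ Bs' ⊂ Bs, ¬ G.IsSeparator c f Bs'

/-- `u` and `g` lie in the same connected component of `G − B`. -/
def SimpleGraph.InSepComp {V : Type*} (G : SimpleGraph V) (Bs : Set V) (u g : V) : Prop :=
  ∃ (hu : u ∈ Bsᶜ) (hg : g ∈ Bsᶜ), (G.induce Bsᶜ).Reachable ⟨u, hu⟩ ⟨g, hg⟩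

namespace CoxeterMatrix

variable {B : Type*}

/-- The underlying graph of the presentation diagram of a Coxeter matrix:
vertices are the indices, and `s, t` are adjacent when `m(s,t) < ∞`
(`0` encodes `∞`). -/
def pDiagram (M : CoxeterMatrix B) : SimpleGraph B where
  Adj s t := s ≠ t ∧ M s t ≠ 0
  symm := ⟨by intro s t h; exact ⟨h.1.symm, by rw [M.symmetric]; exact h.2⟩⟩
  loopless := ⟨by intro s h; exact h.1 rfl⟩

/-- The underlying graph of the Coxeter diagram induced on a subset `A`:
`s, t ∈ A` are adjacent when `m(s,t) > 2` (including `m(s,t) = ∞`, encoded by `0`). -/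
def cDiagramOn (M : CoxeterMatrix B) (A : Set B) : SimpleGraph A where
  Adj s t := (s : B) ≠ (t : B) ∧ M s t ≠ 2
  symm := ⟨by intro s t h; exact ⟨h.1.symm, by rw [M.symmetric]; exact h.2⟩⟩
  loopless := ⟨by intro s h; exact h.1 rfl⟩

/-- A *simplex*: a subset whose elements pairwise satisfy `m(s,t) < ∞`. -/
def IsSimplex (M : CoxeterMatrix B) (A : Set B) : Prop :=
  A.Pairwise fun s t => M s t ≠ 0

/-- A subset is *irreducible* if its Coxeter diagram is connected. -/
def IsIrreducible (M : CoxeterMatrix B) (A : Set B) : Prop :=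
  (M.cDiagramOn A).Connected

def IsIrredSimplex (M : CoxeterMatrix B) (A : Set B) : Prop :=
  M.IsSimplex A ∧ M.IsIrreducible A

/-- A maximal irreducible simplex. -/
def IsMaxIrredSimplex (M : CoxeterMatrix B) (A : Set B) : Prop :=
  M.IsIrredSimplex A ∧ ∀ A' : Set B, A ⊂ A' → ¬ M.IsIrredSimplex A'

/-- `A^⊥ = {s : m(s,a) = 2 for all a ∈ A}`. -/
def perp (M : CoxeterMatrix B) (A : Set B) : Set B :=
  {s | ∀ a ∈ A, M s a = 2}

/-- Type `G₃` (= `H₃`): labels `3, 5` on a path, other label `2`. -/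
def IsTypeG3 (M : CoxeterMatrix B) (A : Set B) : Prop :=
  ∃ a b c : B, A = {a, b, c} ∧ M a b = 3 ∧ M b c = 5 ∧ M a c = 2

/-- Type `G₄` (= `H₄`): labels `3, 3, 5` on a path, other labels `2`. -/
def IsTypeG4 (M : CoxeterMatrix B) (A : Set B) : Prop :=
  ∃ a b c d : B, A = {a, b, c, d} ∧ M a b = 3 ∧ M b c = 3 ∧ M c d = 5 ∧
    M a c = 2 ∧ M a d = 2 ∧ M b d = 2

/-- A set of *bad edges*: a symmetric set of pairs `{a,b}` with `m(a,b) ≥ 5` such that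
every irreducible simplex properly containing `{a,b}` is of type `G₃` or `G₄`. -/
def IsBadEdgeSet (M : CoxeterMatrix B) (E : B → B → Prop) : Prop :=
  (∀ a b, E a b → E b a) ∧
  (∀ a b, E a b → M a b = 0 ∨ 5 ≤ M a b) ∧
  (∀ a b, E a b → ∀ A : Set B, M.IsIrredSimplex A → ({a, b} : Set B) ⊂ A →
    M.IsTypeG3 A ∨ M.IsTypeG4 A)

/-- A *bad* irreducible simplex: an irreducible simplex containing a bad edge. -/
def IsBadSimplex (M : CoxeterMatrix B) (E : B → B → Prop) (A : Set B) : Prop :=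
  M.IsIrredSimplex A ∧ ∃ a ∈ A, ∃ b ∈ A, E a b

/-- A *bad separator*: a subset `Bs` containing a pair of eyes `a, b` with `m(a,b) = 2`,
with a bad focus `c ∉ Bs` making `{a,b,c}` a bad maximal irreducible simplex,
`Bs ⊆ {a,b} ∪ {a,b,c}^⊥`, and with a good focus `f ∉ Bs` making `Bs` a minimal
`(c,f)`-separator of the presentation diagram. -/
def IsBadSeparator (M : CoxeterMatrix B) (E : B → B → Prop) (Bs : Set B) : Prop :=
  ∃ a b c : B, a ∈ Bs ∧ b ∈ Bs ∧ M a b = 2 ∧ c ∉ Bs ∧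
    M.IsMaxIrredSimplex {a, b, c} ∧ M.IsBadSimplex E {a, b, c} ∧
    Bs ⊆ {a, b} ∪ M.perp {a, b, c} ∧
    ∃ f, f ∉ Bs ∧ M.pDiagram.IsMinSeparator c f Bs

/-- `{x, y}` is a bad 5-edge: `m(x,y) = 5` and every irreducible simplex
properly containing `{x,y}` is of type `G₃` or `G₄`. -/
def IsBad5Edge (M : CoxeterMatrix B) (x y : B) : Prop :=
  x ≠ y ∧ M x y = 5 ∧ ∀ A : Set B, M.IsIrredSimplex A → ({x, y} : Set B) ⊂ A →
    M.IsTypeG3 A ∨ M.IsTypeG4 A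

/-- The bad-edge set consisting of the single unordered pair `{x, y}`. -/
def singleEdge (x y : B) : B → B → Prop :=
  fun u v => (u = x ∧ v = y) ∨ (u = y ∧ v = x)

end CoxeterMatrix

/-- `Bs` is a bad separator of `S` with head `{a,b,c}` and eyes `{a,b}`
(the head conditions `m(a,b) = 2`, maximality, irreducibility and badness
are carried separately). -/
def CoxeterMatrix.IsBadSepWithHead {B : Type*} (M : CoxeterMatrix B)
    (a b c : B) (Bs : Set B) : Prop :=
  a ∈ Bs ∧ b ∈ Bs ∧ c ∉ Bs ∧ Bs ⊆ ({a, b} : Set B) ∪ M.perp {a, b, c} ∧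
    ∃ f, f ∉ Bs ∧ M.pDiagram.IsMinSeparator c f Bs

/-- The set of good foci of a bad separator `Bs` with head `{a,b,c}`. -/
def CoxeterMatrix.badFoci {B : Type*} (M : CoxeterMatrix B)
    (c : B) (Bs : Set B) : Set B :=
  {f | f ∉ Bs ∧ M.pDiagram.IsMinSeparator c f Bs}

/-!
In `Γ`, the focus `c` is adjacent to every vertex of `D = {a,b} ∪ A^⊥`. If `D` separates `c`
from `f`, let the attachments `N(f)` be the vertices of `D` adjacent to the component of `f` in
`Γ − D`. Each vertex of `N(f)` is joined both to `c` and to that component, so every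
`(c,f)`-separator inside `D` contains `N(f)`; and `N(f)` is itself a separator. Hence `N(f)` is
the unique minimal `(c,f)`-separator inside `D`, it is a bad separator exactly when it contains
both eyes, and an eye `e` can be removed from `D` without losing the separation iff `e ∉ N(f)`.
As `N(f)` depends only on the component of `f`, the foci of distinct bad separators are disjoint
and pairwise non-adjacent.
-/

namespace SimpleGraph

variable {V : Type*} {G : SimpleGraph V} {s t D Bs : Set V} {c e f g u v w : V}

theorem InSepComp.symm (h : G.InSepComp s u v) : G.InSepComp s v u :=
  let ⟨hu, hv, r⟩ := h
  ⟨hv, hu, r.symm⟩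

theorem InSepComp.trans (h : G.InSepComp s u v) (h' : G.InSepComp s v w) :
    G.InSepComp s u w :=
  let ⟨hu, _, r⟩ := h
  let ⟨_, hw, r'⟩ := h'
  ⟨hu, hw, r.trans r'⟩

theorem InSepComp.mono (hst : s ⊆ t) (h : G.InSepComp t u v) : G.InSepComp s u v :=
  let ⟨hu, hv, r⟩ := h
  ⟨fun hus => hu (hst hus), fun hvs => hv (hst hvs),
    r.map (G.induceHomOfLE (Set.compl_subset_compl.2 hst)).toHom⟩

theorem Adj.inSepComp (h : G.Adj u v) (hu : u ∉ s) (hv : v ∉ s) : G.InSepComp s u v :=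
  ⟨hu, hv, Adj.reachable (induce_adj.2 h)⟩

theorem isSeparator_iff : G.IsSeparator c f s ↔ c ∉ s ∧ f ∉ s ∧ ¬ G.InSepComp s c f :=
  ⟨fun ⟨hc, hf, h⟩ => ⟨hc, hf, fun ⟨_, _, r⟩ => h r⟩,
    fun ⟨hc, hf, h⟩ => ⟨hc, hf, fun r => h ⟨hc, hf, r⟩⟩⟩

theorem IsSeparator.left_notMem (h : G.IsSeparator c f s) : c ∉ s :=
  (isSeparator_iff.1 h).1

theorem IsSeparator.right_notMem (h : G.IsSeparator c f s) : f ∉ s :=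
  (isSeparator_iff.1 h).2.1

theorem IsSeparator.mono (hst : s ⊆ t) (hc : c ∉ t) (hf : f ∉ t) (h : G.IsSeparator c f s) :
    G.IsSeparator c f t :=
  isSeparator_iff.2 ⟨hc, hf, fun hcf => (isSeparator_iff.1 h).2.2 (hcf.mono hst)⟩

def attachments (G : SimpleGraph V) (D : Set V) (f : V) : Set V :=
  {v ∈ D | ∃ u, G.Adj v u ∧ G.InSepComp D u f}

theorem attachments_subset : G.attachments D f ⊆ D :=
  fun _ hv => hv.1

theorem attachments_congr (h : G.InSepComp D f g) : G.attachments D f = G.attachments D g := by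
  ext v
  exact and_congr_right fun _ => exists_congr fun _ => and_congr_right fun _ =>
    ⟨fun hu => hu.trans h, fun hu => hu.trans h.symm⟩

theorem inSepComp_of_mem_attachments (hs : s ⊆ D) (hv : v ∈ G.attachments D f) (hvs : v ∉ s) :
    G.InSepComp s v f := by
  obtain ⟨-, u, hvu, hu⟩ := hv
  exact (hvu.inSepComp hvs fun hus => hu.1 (hs hus)).trans (hu.mono hs)

theorem IsSeparator.attachments (h : G.IsSeparator c f D) :
    G.IsSeparator c f (G.attachments D f) := by
  obtain ⟨hc, hf, hcf⟩ := isSeparator_iff.1 h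
  refine isSeparator_iff.2 ⟨fun hc' => hc hc'.1, fun hf' => hf hf'.1, ?_⟩
  rintro ⟨_, _, r⟩
  have stays : ∀ {p q : ↥(G.attachments D f)ᶜ}, (G.induce _).Walk p q →
      G.InSepComp D p f → G.InSepComp D q f := by
    intro p q walk
    induction walk with
    | nil => exact id
    | @cons p q _ hpq _ ih =>
      intro hp
      have hqp : G.Adj q p := hpq.symm
      have hq : (q : V) ∉ D := fun hqD => q.2 ⟨hqD, p, hqp, hp⟩
      exact ih ((hqp.inSepComp hq hp.1).trans hp)
  exact hcf (stays r.symm.some ⟨hf, hf, .refl _⟩)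

theorem isMinSeparator_attachments (hD : D ⊆ G.neighborSet c) (h : G.IsSeparator c f D) :
    G.IsMinSeparator c f (G.attachments D f) := by
  refine ⟨h.attachments, fun s hs hsep => ?_⟩
  obtain ⟨v, hv, hvs⟩ := Set.exists_of_ssubset hs
  obtain ⟨hc, -, hcf⟩ := isSeparator_iff.1 hsep
  exact hcf (((hD hv.1).inSepComp hc hvs).trans
    (inSepComp_of_mem_attachments (hs.subset.trans attachments_subset) hv hvs))

theorem IsMinSeparator.eq_attachments (hD : D ⊆ G.neighborSet c) (hBs : Bs ⊆ D)
    (h : G.IsMinSeparator c f Bs) :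
    G.IsSeparator c f D ∧ Bs = G.attachments D f := by
  obtain ⟨hc, hf, hcf⟩ := isSeparator_iff.1 h.1
  have hfD : f ∉ D := fun hf' => hcf ((hD hf').inSepComp hc hf)
  have hsep : G.IsSeparator c f D := h.1.mono hBs (fun hcD => (hD hcD).ne rfl) hfD
  have hsub : G.attachments D f ⊆ Bs := fun v hv => by
    by_contra hvBs
    exact hcf (((hD hv.1).inSepComp hc hvBs).trans (inSepComp_of_mem_attachments hBs hv hvBs))
  exact ⟨hsep, (hsub.eq_of_not_ssubset fun hss => h.2 _ hss hsep.attachments).symm⟩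

theorem IsSeparator.not_isSeparator_diff_singleton_iff (hD : D ⊆ G.neighborSet c)
    (h : G.IsSeparator c f D) (he : e ∈ D) :
    ¬ G.IsSeparator c f (D \ {e}) ↔ e ∈ G.attachments D f := by
  have hc := h.left_notMem
  refine ⟨fun hnsep => by_contra fun he' => hnsep ?_, fun he' hsep => ?_⟩
  · exact h.attachments.mono (fun v hv => ⟨hv.1, by rintro rfl; exact he' hv⟩)
      (fun hc' => hc hc'.1) (fun hf' => h.right_notMem hf'.1)
  · have he_out : e ∉ D \ {e} := fun he'' => he''.2 rfl
    exact (isSeparator_iff.1 hsep).2.2 (((hD he).inSepComp (fun hc' => hc hc'.1) he_out).trans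
      (inSepComp_of_mem_attachments Set.sdiff_subset he' he_out))

end SimpleGraph

namespace CoxeterMatrix

variable {B : Type*} {M : CoxeterMatrix B}

theorem perp_subset_neighborSet_pDiagram {A : Set B} {c : B} (hc : c ∈ A) :
    M.perp A ⊆ M.pDiagram.neighborSet c := fun v hv => by
  have hvc : M v c = 2 := hv c hc
  refine ⟨?_, by rw [M.symmetric, hvc]; norm_num⟩
  rintro rfl
  rw [M.diagonal] at hvc
  norm_num at hvc

theorem IsSimplex.union_perp_subset_neighborSet_pDiagram {A E : Set B} {c : B}
    (hA : M.IsSimplex A) (hEA : E ⊆ A) (hc : c ∈ A) (hcE : c ∉ E) :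
    E ∪ M.perp A ⊆ M.pDiagram.neighborSet c := by
  rintro v (hv | hv)
  · exact ⟨fun hcv => hcE (hcv ▸ hv), hA hc (hEA hv) fun hcv => hcE (hcv ▸ hv)⟩
  · exact perp_subset_neighborSet_pDiagram hc hv

end CoxeterMatrix

theorem grossFoci_eq_union_badFoci_general {B : Type*} (M : CoxeterMatrix B) (a b c : B)
    (hA : M.IsMaxIrredSimplex {a, b, c})
    (hc : c ∉ ({a, b} : Set B) ∪ M.perp {a, b, c}) :
    ({f | f ∉ ({a, b} : Set B) ∪ M.perp {a, b, c} ∧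
        M.pDiagram.IsSeparator c f (({a, b} : Set B) ∪ M.perp {a, b, c}) ∧
        ¬ M.pDiagram.IsSeparator c f ((({a, b} : Set B) ∪ M.perp {a, b, c}) \ {a}) ∧
        ¬ M.pDiagram.IsSeparator c f ((({a, b} : Set B) ∪ M.perp {a, b, c}) \ {b})} =
      ⋃ Bs ∈ {Bs : Set B | M.IsBadSepWithHead a b c Bs}, M.badFoci c Bs) ∧
    (∀ Bs Bs' : Set B, M.IsBadSepWithHead a b c Bs → M.IsBadSepWithHead a b c Bs' →
      Bs ≠ Bs' → Disjoint (M.badFoci c Bs) (M.badFoci c Bs')) ∧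
    (∀ Bs Bs' : Set B, M.IsBadSepWithHead a b c Bs → M.IsBadSepWithHead a b c Bs' →
      Bs ≠ Bs' → ∀ f ∈ M.badFoci c Bs, ∀ g ∈ M.badFoci c Bs',
        ¬ M.pDiagram.Adj f g) := by
  set D := ({a, b} : Set B) ∪ M.perp {a, b, c}
  have hD : D ⊆ M.pDiagram.neighborSet c :=
    hA.1.1.union_perp_subset_neighborSet_pDiagram (by simp [Set.insert_subset_iff]) (by simp)
      fun hcE => hc (.inl hcE)
  have haD : a ∈ D := .inl (by simp)
  have hbD : b ∈ D := .inl (by simp)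
  have hfoci : ∀ {Bs f}, M.IsBadSepWithHead a b c Bs → f ∈ M.badFoci c Bs →
      M.pDiagram.IsSeparator c f D ∧ Bs = M.pDiagram.attachments D f :=
    fun hBs hf => hf.2.eq_attachments hD hBs.2.2.2.1
  refine ⟨?_, fun Bs Bs' hBs hBs' hne => Set.disjoint_left.2 fun f hf hf' =>
    hne ((hfoci hBs hf).2.trans (hfoci hBs' hf').2.symm), ?_⟩
  · ext f
    simp only [Set.mem_ofPred_eq, Set.mem_iUnion, exists_prop]
    constructor
    · rintro ⟨-, hsep, hna, hnb⟩
      have hmin := SimpleGraph.isMinSeparator_attachments hD hsep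
      have hf := hmin.1.right_notMem
      have hsub := SimpleGraph.attachments_subset (G := M.pDiagram) (D := D) (f := f)
      exact ⟨_, ⟨(hsep.not_isSeparator_diff_singleton_iff hD haD).1 hna,
        (hsep.not_isSeparator_diff_singleton_iff hD hbD).1 hnb,
        fun hc' => hc (hsub hc'), hsub, f, hf, hmin⟩, hf, hmin⟩
    · rintro ⟨Bs, hBs, hf⟩
      obtain ⟨hsep, rfl⟩ := hfoci hBs hf
      exact ⟨hsep.right_notMem, hsep, (hsep.not_isSeparator_diff_singleton_iff hD haD).2 hBs.1,
        (hsep.not_isSeparator_diff_singleton_iff hD hbD).2 hBs.2.1⟩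
  · intro Bs Bs' hBs hBs' hne f hf g hg hfg
    obtain ⟨hfsep, rfl⟩ := hfoci hBs hf
    obtain ⟨hgsep, rfl⟩ := hfoci hBs' hg
    exact hne <|
      SimpleGraph.attachments_congr (hfg.inSepComp hfsep.right_notMem hgsep.right_notMem)

/-- **Lemma 5.9.** Let `(W,S)` be a Coxeter system with exactly one bad 5-edge. Let
`D = {a,b} ∪ A^⊥` be a gross separator with head `A = {a,b,c}`, let `F` be the set
of good foci of `D`, and for each bad separator `Bs` with head `A` let `F_Bs` be its
set of good foci. Then `F` is the union of the `F_Bs`, the `F_Bs` are pairwise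
disjoint, and no element of `F_Bs` is adjacent in `Γ(W,S)` to an element of `F_Bs'`
for `Bs ≠ Bs'`. -/
theorem grossFoci_eq_union_badFoci {B : Type*} (M : CoxeterMatrix B)
    (x y : B) (hxy : M.IsBad5Edge x y) (a b c : B) (hab : M a b = 2)
    (hA : M.IsMaxIrredSimplex {a, b, c})
    (hbad : M.IsBadSimplex (CoxeterMatrix.singleEdge x y) {a, b, c})
    (hc : c ∉ ({a, b} : Set B) ∪ M.perp {a, b, c})
    (hgross : ∃ f, f ∉ ({a, b} : Set B) ∪ M.perp {a, b, c} ∧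
      M.pDiagram.IsSeparator c f (({a, b} : Set B) ∪ M.perp {a, b, c}) ∧
      ¬ M.pDiagram.IsSeparator c f ((({a, b} : Set B) ∪ M.perp {a, b, c}) \ {a}) ∧
      ¬ M.pDiagram.IsSeparator c f ((({a, b} : Set B) ∪ M.perp {a, b, c}) \ {b})) :
    ({f | f ∉ ({a, b} : Set B) ∪ M.perp {a, b, c} ∧
        M.pDiagram.IsSeparator c f (({a, b} : Set B) ∪ M.perp {a, b, c}) ∧
        ¬ M.pDiagram.IsSeparator c f ((({a, b} : Set B) ∪ M.perp {a, b, c}) \ {a}) ∧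
        ¬ M.pDiagram.IsSeparator c f ((({a, b} : Set B) ∪ M.perp {a, b, c}) \ {b})} =
      ⋃ Bs ∈ {Bs : Set B | M.IsBadSepWithHead a b c Bs}, M.badFoci c Bs) ∧
    (∀ Bs Bs' : Set B, M.IsBadSepWithHead a b c Bs → M.IsBadSepWithHead a b c Bs' →
      Bs ≠ Bs' → Disjoint (M.badFoci c Bs) (M.badFoci c Bs')) ∧
    (∀ Bs Bs' : Set B, M.IsBadSepWithHead a b c Bs → M.IsBadSepWithHead a b c Bs' →
      Bs ≠ Bs' → ∀ f ∈ M.badFoci c Bs, ∀ g ∈ M.badFoci c Bs',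
        ¬ M.pDiagram.Adj f g) :=
  grossFoci_eq_union_badFoci_general M a b c hA hc
end

section
/- Let (W,S) be a Coxeter system of finite rank and w ∈ W an element of order two. Then there is a subset I of S such that the standard parabolic ⟨I⟩ is finite, w is conjugate in W to the longest element w_I of ⟨I⟩, and w_I is central in ⟨I⟩. -/
/-!
Let `v` be a conjugate of `w` of minimal length. Since `v = v⁻¹`, every right descent `s` of `v`
is also a left descent, and the exchange property gives either `s v = v s` or
`ℓ (s v s) < ℓ v`; minimality excludes the latter. So `v` centralises `W_I`, where `I` is the
right descent set of `v`, and an exchange argument along `W_I` yields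
`ℓ (v u) + ℓ u = ℓ v` for all `u ∈ W_I`. Hence `W_I` is finite, `v` is of maximal length on it,
and an element `v u` (`u ∈ W_I`) of minimal length has no left descent, so `v = u⁻¹ ∈ W_I`.

The exchange property comes from Tits' permutation representation of `W` on `W × ZMod 2`: it
shows that the parity of the number of occurrences of `t` in the right inversion sequence of a
word only depends on the element of `W` the word represents.
-/

namespace CoxeterSystem

open List

variable {B W : Type*} [Group W] {M : CoxeterMatrix B} (cs : CoxeterSystem M W)

local prefix:100 "s" => cs.simple
local prefix:100 "π" => cs.wordProd
local prefix:100 "ℓ" => cs.length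
local prefix:100 "ris" => cs.rightInvSeq
local prefix:100 "lis" => cs.leftInvSeq

theorem prod_map_alternatingWord_two_mul {G : Type*} [Monoid G] (f : B → G) (i i' : B) (m : ℕ) :
    ((alternatingWord i i' (2 * m)).map f).prod = (f i * f i') ^ m := by
  induction m with
  | zero => simp [alternatingWord]
  | succ m ih =>
    rw [show 2 * (m + 1) = 2 * m + 1 + 1 by ring, alternatingWord_succ', alternatingWord_succ',
      if_neg (by simp [parity_simps]), if_pos (by simp), map_cons, map_cons, prod_cons, prod_cons,
      ih, pow_succ', mul_assoc]

theorem reverse_alternatingWord_two_mul (i i' : B) (m : ℕ) :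
    (alternatingWord i i' (2 * m)).reverse = alternatingWord i' i (2 * m) := by
  induction m with
  | zero => rfl
  | succ m ih =>
    rw [show 2 * (m + 1) = 2 * m + 1 + 1 by ring, alternatingWord_succ, alternatingWord_succ,
      alternatingWord_succ', alternatingWord_succ', if_neg (by simp [parity_simps]),
      if_pos (by simp)]
    simp [ih]

theorem even_count_rightInvSeq_alternatingWord [DecidableEq W] (i i' : B) (t : W) :
    Even ((ris (alternatingWord i i' (2 * M i i'))).count t) := by
  set m := M i i'
  set L := lis (alternatingWord i' i (2 * m)) with hL
  have hlen : L.length = m + m := by simp [L]; ring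
  have hperiod : L.drop m = L.take m := by
    refine ext_getElem (by simp [hlen]) fun k h₁ h₂ => ?_
    simp only [getElem_drop, getElem_take, L]
    rw [getElem_leftInvSeq_alternatingWord _ _ _ _ _ (by simp at h₂; omega),
      getElem_leftInvSeq_alternatingWord _ _ _ _ _ (by simp at h₂; omega),
      prod_alternatingWord_eq_mul_pow, prod_alternatingWord_eq_mul_pow]
    simp [Nat.mul_add_div, pow_add, m]
  rw [← reverse_alternatingWord_two_mul, rightInvSeq_reverse, count_reverse, ← hL,
    ← take_append_drop m L, hperiod, count_append]
  exact ⟨_, rfl⟩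

theorem lift_apply_wordProd {G : Type*} [Monoid G] {f : B → G} (hf : M.IsLiftable f)
    (ω : List B) : cs.lift ⟨f, hf⟩ (π ω) = (ω.map f).prod := by
  rw [wordProd, map_list_prod, map_map]
  exact congrArg prod (map_congr_left fun i _ => cs.lift_apply_simple hf i)

section TitsRepresentation

variable [DecidableEq W]

def titsGen (i : B) : Equiv.Perm (W × ZMod 2) :=
  Function.Involutive.toPerm (fun p => (s i * p.1 * s i, p.2 + if p.1 = s i then 1 else 0))
    fun p => by
      have hconj : s i * p.1 * s i = s i ↔ p.1 = s i := by
        simpa using (MulAut.conj (s i)).injective.eq_iff (a := p.1) (b := s i)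
      ext
      · simp [mul_assoc]
      · simp only [hconj, add_assoc, CharTwo.add_self_eq_zero, add_zero]

theorem prod_map_titsGen_apply (ω : List B) (p : W × ZMod 2) :
    (ω.map cs.titsGen).prod p = (π ω * p.1 * (π ω)⁻¹, p.2 + (ris ω).count p.1) := by
  induction ω generalizing p with
  | nil => simp
  | cons i ω ih =>
    have hconj : π ω * (p.1 * (π ω)⁻¹) = s i ↔ (π ω)⁻¹ * (s i * π ω) = p.1 := by
      constructor <;> intro h <;> rw [← h] <;> group
    rw [map_cons, prod_cons, Equiv.Perm.mul_apply, ih]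
    simp only [titsGen, Function.Involutive.coe_toPerm, rightInvSeq, count_cons, beq_iff_eq,
      hconj, wordProd_cons, mul_inv_rev, inv_simple, mul_assoc, Nat.cast_add, Nat.cast_ite,
      Nat.cast_one, Nat.cast_zero, add_assoc]

theorem isLiftable_titsGen : M.IsLiftable cs.titsGen := by
  intro i i'
  rw [← prod_map_alternatingWord_two_mul]
  refine Equiv.ext fun p => ?_
  obtain ⟨k, hk⟩ := cs.even_count_rightInvSeq_alternatingWord i i' p.1
  rw [prod_map_titsGen_apply, hk, prod_alternatingWord_eq_mul_pow, if_pos (even_two_mul _),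
    Nat.mul_div_cancel_left _ two_pos, simple_mul_simple_pow]
  simp only [Nat.cast_add, CharTwo.add_self_eq_zero, add_zero, mul_one, inv_one, one_mul,
    Equiv.Perm.one_apply]

theorem count_rightInvSeq_eq_of_wordProd_eq {ω ω' : List B} (h : π ω = π ω') (t : W) :
    ((ris ω).count t : ZMod 2) = (ris ω').count t := by
  have := congrArg (fun w => (cs.lift ⟨_, cs.isLiftable_titsGen⟩ w (t, 0)).2) h
  simpa [lift_apply_wordProd, prod_map_titsGen_apply] using this

end TitsRepresentation

theorem simple_mem_rightInvSeq_of_isRightDescent {ω : List B} {j : B}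
    (hj : cs.IsRightDescent (π ω) j) : s j ∈ ris ω := by
  classical
  by_contra hnot
  obtain ⟨ζ, hζ, hζω⟩ := cs.exists_isReduced (π ω * s j)
  have hprod : π ω = π (ζ.concat j) := by
    rw [wordProd_concat, ← hζω, simple_mul_simple_cancel_right]
  have hcount := cs.count_rightInvSeq_eq_of_wordProd_eq hprod (s j)
  have hconj := count_map_of_injective (ris ζ) _ (MulAut.conj (s j)).injective (s j)
  rw [MulAut.conj_apply, inv_simple, simple_mul_simple_cancel_right] at hconj
  rw [count_eq_zero_of_not_mem hnot, rightInvSeq_concat, concat_eq_append, count_append, hconj,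
    count_singleton_self] at hcount
  have hmem : s j ∈ ris ζ := by
    rw [← count_pos_iff, Nat.pos_iff_ne_zero]
    rintro h0
    rw [h0] at hcount
    exact absurd hcount (by decide)
  have hlt := (cs.isRightInversion_of_mem_rightInvSeq hζ hmem).2
  rw [← hζω, simple_mul_simple_cancel_right] at hlt
  exact lt_asymm hj hlt

theorem exists_eraseIdx_of_isRightDescent {ω : List B} {j : B}
    (hj : cs.IsRightDescent (π ω) j) : ∃ k < ω.length, π ω * s j = π (ω.eraseIdx k) := by
  obtain ⟨k, hk, hkj⟩ := getElem_of_mem (cs.simple_mem_rightInvSeq_of_isRightDescent hj)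
  refine ⟨k, by simpa using hk, ?_⟩
  rw [← hkj, ← cs.wordProd_mul_getD_rightInvSeq, getD_eq_getElem]

theorem length_wordProd_eraseIdx_lt {ω : List B} (hω : cs.IsReduced ω) {k : ℕ}
    (hk : k < ω.length) :
    ℓ (π (ω.eraseIdx k)) < ℓ (π ω) := by
  have := cs.length_wordProd_le (ω.eraseIdx k)
  rw [length_eraseIdx_of_lt hk] at this
  rw [hω.eq]
  omega

theorem commute_simple_or_length_simple_mul_mul_simple_lt {v : W} {j : B}
    (hl : cs.IsLeftDescent v j) (hr : cs.IsRightDescent v j) :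
    s j * v = v * s j ∨ ℓ (s j * v * s j) < ℓ v := by
  obtain ⟨ζ, hζ, hζv⟩ := cs.exists_isReduced (s j * v)
  have hv : π (j :: ζ) = v := by rw [wordProd_cons, ← hζv, simple_mul_simple_cancel_left]
  have hred : cs.IsReduced (j :: ζ) := by
    rw [IsReduced, hv, length_cons, ← hζ.eq, ← hζv, ← cs.isLeftDescent_iff.mp hl]
  rw [← hv] at hr
  obtain ⟨k, hk, hexch⟩ := cs.exists_eraseIdx_of_isRightDescent hr
  rw [hv] at hexch
  cases k with
  | zero => exact Or.inl (by rw [hexch, eraseIdx_cons_zero, ← hζv])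
  | succ k =>
    right
    rw [eraseIdx_cons_succ, wordProd_cons] at hexch
    have hk' : k < ζ.length := by simpa using hk
    calc ℓ (s j * v * s j) = ℓ (π (ζ.eraseIdx k)) := by
          rw [mul_assoc, hexch, simple_mul_simple_cancel_left]
      _ < ℓ (π ζ) := cs.length_wordProd_eraseIdx_lt hζ hk'
      _ < ℓ v := by rw [← hζv]; exact hl

theorem isRightDescent_or_length_mul_mul_simple_mul_inv_lt {a b : W} {j : B}
    (hab : ℓ (a * b) = ℓ a + ℓ b) (hj : cs.IsRightDescent (a * b) j) :
    cs.IsRightDescent b j ∨ ℓ (a * b * s j * b⁻¹) < ℓ a := by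
  obtain ⟨ρ, hρ, rfl⟩ := cs.exists_isReduced a
  obtain ⟨ζ, hζ, rfl⟩ := cs.exists_isReduced b
  have hred : cs.IsReduced (ρ ++ ζ) := by
    rw [IsReduced, wordProd_append, hab, length_append, hρ.eq, hζ.eq]
  rw [← wordProd_append] at hj
  obtain ⟨k, hk, hexch⟩ := cs.exists_eraseIdx_of_isRightDescent hj
  rw [wordProd_append] at hexch
  rcases lt_or_ge k ρ.length with hkρ | hkρ
  · right
    rw [eraseIdx_append_of_lt_length hkρ, wordProd_append] at hexch
    rw [hexch, mul_inv_cancel_right]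
    exact cs.length_wordProd_eraseIdx_lt hρ hkρ
  · left
    rw [eraseIdx_append_of_length_le hkρ, wordProd_append, mul_assoc, mul_right_inj] at hexch
    rw [IsRightDescent, hexch]
    exact cs.length_wordProd_eraseIdx_lt hζ (by simp at hk; omega)

def parabolic (I : Set B) : Subgroup W := Subgroup.closure (cs.simple '' I)

theorem finite_setOf_length_le [Finite B] (n : ℕ) : {w : W | ℓ w ≤ n}.Finite := by
  refine ((List.finite_length_le B n).image cs.wordProd).subset fun w hw => ?_
  obtain ⟨ω, hω, rfl⟩ := cs.exists_isReduced w
  exact ⟨ω, by simpa [hω.eq] using hw, rfl⟩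

theorem exists_isConj_forall_isConj_length_le (w : W) :
    ∃ v, IsConj w v ∧ ∀ x, IsConj v x → ℓ v ≤ ℓ x := by
  obtain ⟨v, hwv, hmin⟩ := exists_minimalFor_of_wellFoundedLT (IsConj w) cs.length ⟨w, .refl w⟩
  exact ⟨v, hwv, fun x hvx => (le_total (ℓ x) (ℓ v)).elim (hmin (hwv.trans hvx)) id⟩

section MinimalInvolution

variable {v : W}

theorem simple_mul_eq_mul_simple_of_isRightDescent (hinv : v⁻¹ = v)
    (hmin : ∀ x, IsConj v x → ℓ v ≤ ℓ x) {j : B} (hj : cs.IsRightDescent v j) :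
    s j * v = v * s j := by
  have hl : cs.IsLeftDescent v j := by rw [← hinv]; exact cs.isLeftDescent_inv_iff.mpr hj
  refine (cs.commute_simple_or_length_simple_mul_mul_simple_lt hl hj).resolve_right
    (hmin _ (isConj_iff.mpr ⟨s j, by rw [inv_simple]⟩)).not_gt

theorem parabolic_rightDescents_le_centralizer (hinv : v⁻¹ = v)
    (hmin : ∀ x, IsConj v x → ℓ v ≤ ℓ x) :
    cs.parabolic {i | cs.IsRightDescent v i} ≤ Subgroup.centralizer {v} := by
  rw [parabolic, Subgroup.closure_le]
  rintro _ ⟨j, hj, rfl⟩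
  exact Subgroup.mem_centralizer_singleton_iff.mpr
    (cs.simple_mul_eq_mul_simple_of_isRightDescent hinv hmin hj)

theorem length_mul_add_length_of_mem_parabolic (hinv : v⁻¹ = v)
    (hmin : ∀ x, IsConj v x → ℓ v ≤ ℓ x) {u : W}
    (hu : u ∈ cs.parabolic {i | cs.IsRightDescent v i}) : ℓ (v * u) + ℓ u = ℓ v := by
  have hcent := cs.parabolic_rightDescents_le_centralizer hinv hmin
  suffices step : ∀ u ∈ cs.parabolic {i | cs.IsRightDescent v i}, ∀ j, cs.IsRightDescent v j →
      ℓ (v * u) + ℓ u = ℓ v → ℓ (v * (u * s j)) + ℓ (u * s j) = ℓ v by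
    induction hu using Subgroup.closure_induction_right with
    | one => simp
    | mul_right u hu _ hs ih =>
      obtain ⟨j, hj, rfl⟩ := hs
      exact step u hu j hj ih
    | mul_inv_cancel u hu _ hs ih =>
      obtain ⟨j, hj, rfl⟩ := hs
      rw [inv_simple]
      exact step u hu j hj ih
  intro u hu j hj ih
  have hvus := cs.length_mul_simple (v * u) j
  rw [← mul_assoc]
  rcases cs.length_mul_simple u j with hus | hus
  · -- In `v = u⁻¹ * (v * u)` the exchange property deletes a letter of `v * u` or of `u⁻¹`;
    -- the latter would make `(u * s j)⁻¹` shorter than `u`.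
    suffices cs.IsRightDescent (v * u) j by rw [IsRightDescent] at this; omega
    have hvu : u * v = v * u := Subgroup.mem_centralizer_singleton_iff.mp (hcent hu)
    have hcomm : s j * u⁻¹ * v = v * (s j * u⁻¹) := Subgroup.mem_centralizer_singleton_iff.mp
      (hcent (mul_mem (Subgroup.subset_closure ⟨j, hj, rfl⟩) (inv_mem hu)))
    have hv : u⁻¹ * (v * u) = v := by rw [← hvu, inv_mul_cancel_left]
    have hsplit : ℓ (u⁻¹ * (v * u)) = ℓ u⁻¹ + ℓ (v * u) := by rw [hv, length_inv]; omega
    rw [← hv] at hj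
    refine (cs.isRightDescent_or_length_mul_mul_simple_mul_inv_lt hsplit hj).resolve_right ?_
    have hconj : u⁻¹ * (v * u) * s j * (v * u)⁻¹ = (u * s j)⁻¹ := by
      calc u⁻¹ * (v * u) * s j * (v * u)⁻¹ = u⁻¹ * (u * v) * s j * (v * u)⁻¹ := by rw [hvu]
        _ = v * (s j * u⁻¹) * v⁻¹ := by group
        _ = (u * s j)⁻¹ := by rw [← hcomm, mul_inv_rev, inv_simple]; group
    rw [hconj, length_inv, length_inv]
    omega
  · have := cs.length_le_length_mul_add_right v (u * s j)
    rw [← mul_assoc] at this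
    omega

theorem mem_parabolic_rightDescents (hinv : v⁻¹ = v) (hmin : ∀ x, IsConj v x → ℓ v ≤ ℓ x) :
    v ∈ cs.parabolic {i | cs.IsRightDescent v i} := by
  set K := cs.parabolic {i | cs.IsRightDescent v i}
  obtain ⟨u, huK, hu⟩ :=
    exists_minimalFor_of_wellFoundedLT (· ∈ K) (fun u => ℓ (v * u)) ⟨1, one_mem K⟩
  by_cases hvu : v * u = 1
  · rw [eq_inv_of_mul_eq_one_left hvu]
    exact inv_mem huK
  obtain ⟨j, hj⟩ := cs.exists_leftDescent_of_ne_one hvu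
  have hadd := cs.length_mul_add_length_of_mem_parabolic hinv hmin huK
  have hjv : cs.IsRightDescent v j := by
    rw [← cs.isLeftDescent_inv_iff, hinv, IsLeftDescent]
    have := cs.length_le_length_mul_add_right (s j * v) u
    rw [IsLeftDescent, ← mul_assoc] at hj
    omega
  have hju : s j * u ∈ K := mul_mem (Subgroup.subset_closure ⟨j, hjv, rfl⟩) huK
  have hshorter : ℓ (v * (s j * u)) < ℓ (v * u) := by
    rwa [← mul_assoc, ← cs.simple_mul_eq_mul_simple_of_isRightDescent hinv hmin hjv, mul_assoc]
  exact absurd (hu hju hshorter.le) hshorter.not_ge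

end MinimalInvolution

end CoxeterSystem

/-- **Richardson's theorem.** Let `(W,S)` be a Coxeter system of finite rank and let
`w ∈ W` have order two. Then there is a subset `I` of `S` such that the standard
parabolic subgroup `⟨I⟩` is finite, `w` is conjugate in `W` to the longest element
`w_I` of `⟨I⟩`, and `w_I` is central in `⟨I⟩`. -/
theorem exists_finite_parabolic_longest_central {B W : Type*} [Group W] [Finite B]
    {M : CoxeterMatrix B} (cs : CoxeterSystem M W) (w : W) (hw : orderOf w = 2) :
    ∃ I : Set B, ∃ wI ∈ Subgroup.closure (cs.simple '' I),
      (Subgroup.closure (cs.simple '' I) : Set W).Finite ∧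
      (∀ u ∈ Subgroup.closure (cs.simple '' I), cs.length u ≤ cs.length wI) ∧
      IsConj w wI ∧
      ∀ u ∈ Subgroup.closure (cs.simple '' I), wI * u = u * wI := by
  obtain ⟨v, hwv, hmin⟩ := cs.exists_isConj_forall_isConj_length_le w
  have hinv : v⁻¹ = v := by
    have hv2 : v ^ 2 = 1 :=
      isConj_one_right.mp (by simpa [← hw, pow_orderOf_eq_one] using hwv.pow 2)
    exact inv_eq_of_mul_eq_one_right (by rwa [sq] at hv2)
  have hlen (u) (hu : u ∈ cs.parabolic {i | cs.IsRightDescent v i}) :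
      cs.length u ≤ cs.length v := by
    have := cs.length_mul_add_length_of_mem_parabolic hinv hmin hu
    omega
  refine ⟨{i | cs.IsRightDescent v i}, v, cs.mem_parabolic_rightDescents hinv hmin,
    (cs.finite_setOf_length_le (cs.length v)).subset hlen, hlen, hwv, fun u hu => ?_⟩
  exact (Subgroup.mem_centralizer_singleton_iff.mp
    (cs.parabolic_rightDescents_le_centralizer hinv hmin hu)).symm
end
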